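/- arXiv:1904.00826 — 8 statements merged into one kernel-verified Lean document; each statement's English description precedes it below -/
import Mathlib

section
/- Let N ≥ 1, p₁, p₂ ∈ ℂ, and let u : ℤ → ℤ → ZMod N → ℂ. Suppose u satisfies, for all n, m ∈ ℤ and h ∈ ZMod N, the quadrilateral system in product form: (p₁ + u n (m+1) (h+1) − u (n+1) (m+1) h)·(p₂ + u n m (h+1) − u n (m+1) h) = (p₂ + u (n+1) m (h+1) − u (n+1) (m+1) h)·(p₁ + u n m (h+1) − u (n+1) m h). Fix n, m and let f : ZMod N → ℂ be arbitrary. Define g, g' : ZMod N → ℂ by g h = (p₂ + u n m (h+1) − u n (m+1) h)·f h + f (h+1) and g' h = (p₁ + u n m (h+1) − u (n+1) m h)·f h + f (h+1). Then for all h ∈ ZMod N: (p₁ + u n (m+1) (h+1) − u (n+1) (m+1) h)·g h + g (h+1) = (p₂ + u (n+1) m (h+1) − u (n+1) (m+1) h)·g' h + g' (h+1). -/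
theorem lax_pair_compatibility_general (N : ℕ) (p₁ p₂ : ℂ)
    (u : ℤ → ℤ → ZMod N → ℂ)
    (hu : ∀ (n m : ℤ) (h : ZMod N),
      (p₁ + u n (m+1) (h+1) - u (n+1) (m+1) h) * (p₂ + u n m (h+1) - u n (m+1) h)
        = (p₂ + u (n+1) m (h+1) - u (n+1) (m+1) h) * (p₁ + u n m (h+1) - u (n+1) m h))
    (n m : ℤ) (f : ZMod N → ℂ)
    (g g' : ZMod N → ℂ)
    (hg : ∀ h, g h = (p₂ + u n m (h+1) - u n (m+1) h) * f h + f (h+1))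
    (hg' : ∀ h, g' h = (p₁ + u n m (h+1) - u (n+1) m h) * f h + f (h+1)) :
    ∀ h : ZMod N,
      (p₁ + u n (m+1) (h+1) - u (n+1) (m+1) h) * g h + g (h+1)
        = (p₂ + u (n+1) m (h+1) - u (n+1) (m+1) h) * g' h + g' (h+1) := by
  intro h
  rw [hg, hg, hg', hg']
  -- The coefficients of `f (h+1)` and `f (h+2)` agree on both sides identically (the intermediate
  -- values `u n (m+1) (h+1)` and `u (n+1) m (h+1)` cancel); the coefficient of `f h` is the lattice equation.
  linear_combination f h * hu n m h

theorem lax_pair_compatibility (N : ℕ) (hN : 1 ≤ N) (p₁ p₂ : ℂ)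
    (u : ℤ → ℤ → ZMod N → ℂ)
    (hu : ∀ (n m : ℤ) (h : ZMod N),
      (p₁ + u n (m+1) (h+1) - u (n+1) (m+1) h) * (p₂ + u n m (h+1) - u n (m+1) h)
        = (p₂ + u (n+1) m (h+1) - u (n+1) (m+1) h) * (p₁ + u n m (h+1) - u (n+1) m h))
    (n m : ℤ) (f : ZMod N → ℂ)
    (g g' : ZMod N → ℂ)
    (hg : ∀ h, g h = (p₂ + u n m (h+1) - u n (m+1) h) * f h + f (h+1))
    (hg' : ∀ h, g' h = (p₁ + u n m (h+1) - u (n+1) m h) * f h + f (h+1)) :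
    ∀ h : ZMod N,
      (p₁ + u n (m+1) (h+1) - u (n+1) (m+1) h) * g h + g (h+1)
        = (p₂ + u (n+1) m (h+1) - u (n+1) (m+1) h) * g' h + g' (h+1) :=
  lax_pair_compatibility_general N p₁ p₂ u hu n m f g g' hg hg'
end

section
/- Let N ≥ 1, p₁, p₂ ∈ ℂ, and let u, v : ℤ → ℤ → ZMod N → ℂ with v everywhere nonzero. Assume the Miura relations hold for all n, m ∈ ℤ and h ∈ ZMod N: p₁ + u n m (h+1) − u (n+1) m h = p₁ · (v (n+1) m h)/(v n m h) and p₂ + u n m (h+1) − u n (m+1) h = p₂ · (v n (m+1) h)/(v n m h). Then v satisfies the modified lattice system: for all n, m, h, p₁·( (v (n+1) (m+1) h)/(v n (m+1) h) − (v (n+1) m (h+1))/(v n m (h+1)) ) = p₂·( (v (n+1) (m+1) h)/(v (n+1) m h) − (v n (m+1) (h+1))/(v n m (h+1)) ). -/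
theorem miura_implies_modified_system_general (N : ℕ) (p₁ p₂ : ℂ)
    (u v : ℤ → ℤ → ZMod N → ℂ)
    (hM1 : ∀ (n m : ℤ) (h : ZMod N),
      p₁ + u n m (h+1) - u (n+1) m h = p₁ * (v (n+1) m h) / (v n m h))
    (hM2 : ∀ (n m : ℤ) (h : ZMod N),
      p₂ + u n m (h+1) - u n (m+1) h = p₂ * (v n (m+1) h) / (v n m h)) :
    ∀ (n m : ℤ) (h : ZMod N),
      p₁ * ((v (n+1) (m+1) h) / (v n (m+1) h) - (v (n+1) m (h+1)) / (v n m (h+1)))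
        = p₂ * ((v (n+1) (m+1) h) / (v (n+1) m h) - (v n (m+1) (h+1)) / (v n m (h+1))) := by
  intro n m h
  -- Each of the four ratios is a `u`-difference by a Miura relation, and the `u`-terms cancel.
  linear_combination hM1 n m (h+1) + hM2 (n+1) m h - hM1 n (m+1) h - hM2 n m (h+1)

theorem miura_implies_modified_system (N : ℕ) (hN : 1 ≤ N) (p₁ p₂ : ℂ)
    (u v : ℤ → ℤ → ZMod N → ℂ)
    (hv : ∀ n m h, v n m h ≠ 0)
    (hM1 : ∀ (n m : ℤ) (h : ZMod N),
      p₁ + u n m (h+1) - u (n+1) m h = p₁ * (v (n+1) m h) / (v n m h))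
    (hM2 : ∀ (n m : ℤ) (h : ZMod N),
      p₂ + u n m (h+1) - u n (m+1) h = p₂ * (v n (m+1) h) / (v n m h)) :
    ∀ (n m : ℤ) (h : ZMod N),
      p₁ * ((v (n+1) (m+1) h) / (v n (m+1) h) - (v (n+1) m (h+1)) / (v n m (h+1)))
        = p₂ * ((v (n+1) (m+1) h) / (v (n+1) m h) - (v n (m+1) (h+1)) / (v n m (h+1))) :=
  miura_implies_modified_system_general N p₁ p₂ u v hM1 hM2
end

section
/- Let N ≥ 1, p₁, p₂ ∈ ℂ, and let u, v : ℤ → ℤ → ZMod N → ℂ with v everywhere nonzero. Assume the Miura relations hold for all n, m ∈ ℤ and h ∈ ZMod N: p₁ + u n m (h+1) − u (n+1) m h = p₁ · (v (n+1) m h)/(v n m h) and p₂ + u n m (h+1) − u n (m+1) h = p₂ · (v n (m+1) h)/(v n m h). Then u satisfies the unmodified lattice system in product form: for all n, m, h, (p₁ + u n (m+1) (h+1) − u (n+1) (m+1) h)·(p₂ + u n m (h+1) − u n (m+1) h) = (p₂ + u (n+1) m (h+1) − u (n+1) (m+1) h)·(p₁ + u n m (h+1) − u (n+1) m h). -/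
theorem miura_implies_unmodified_system (N : ℕ) (hN : 1 ≤ N) (p₁ p₂ : ℂ)
    (u v : ℤ → ℤ → ZMod N → ℂ)
    (hv : ∀ n m h, v n m h ≠ 0)
    (hM1 : ∀ (n m : ℤ) (h : ZMod N),
      p₁ + u n m (h+1) - u (n+1) m h = p₁ * (v (n+1) m h) / (v n m h))
    (hM2 : ∀ (n m : ℤ) (h : ZMod N),
      p₂ + u n m (h+1) - u n (m+1) h = p₂ * (v n (m+1) h) / (v n m h)) :
    ∀ (n m : ℤ) (h : ZMod N),
      (p₁ + u n (m+1) (h+1) - u (n+1) (m+1) h) * (p₂ + u n m (h+1) - u n (m+1) h)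
        = (p₂ + u (n+1) m (h+1) - u (n+1) (m+1) h) * (p₁ + u n m (h+1) - u (n+1) m h) := by
  intro n m h
  rw [hM1 n (m+1) h, hM2 n m h, hM2 (n+1) m h, hM1 n m h]
  field_simp [hv n m h, hv (n+1) m h, hv n (m+1) h, hv (n+1) (m+1) h]
end

section
/- Let N ≥ 1, p₁, p₂ ∈ ℂ, and let u, W : ℤ → ℤ → ZMod N → ℂ. Assume that for all n, m ∈ ℤ and h ∈ ZMod N the following three relations hold: (a) W (n+1) m h − W n (m+1) h = p₁·(u n m h − u (n+1) m h) − p₂·(u n m h − u n (m+1) h) + u n m h·(u n (m+1) h − u (n+1) m h); (b) W n (m+1) h − W n m (h+1) = p₂·(u n m h − u n (m+1) h) + u n m h·(u n m (h+1) − u n (m+1) h); (c) W n (m+1) h − W (n+1) m h = −p₁·(u n m h − u (n+1) m h) + u n m h·(u (n+1) m h − u n m (h+1)). Then u satisfies, for all n, m, h: (p₁ + u n (m+1) (h+1) − u (n+1) (m+1) h)·(p₂ + u n m (h+1) − u n (m+1) h) = (p₂ + u (n+1) m (h+1) − u (n+1) (m+1) h)·(p₁ + u n m (h+1) − u (n+1)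 m h). -/
/-!
Relations (a) and (b) prescribe the differences of `W` along face diagonals of the unit cube
in the `(n, m)` and `(m, h)` directions. Computing `W (n+1) (m+1) h - W n (m+1) (h+1)` along
the two routes through the cube, via (a) and (b) at `(n, m+1, h)` or via (a) at `(n, m, h+1)`
and (b) at `(n+1, m, h)`, and equating the results eliminates `W`; what remains is a
polynomial identity in `u` that is a rearrangement of the quadrilateral equation.
-/

theorem shift_differences_compatible {H M : Type*} [Add H] [One H] [AddCommGroup M]
    (W A B : ℤ → ℤ → H → M)
    (hA : ∀ n m h, W (n+1) m h - W n (m+1) h = A n m h)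
    (hB : ∀ n m h, W n (m+1) h - W n m (h+1) = B n m h) (n m : ℤ) (h : H) :
    A n (m+1) h + B n (m+1) h = A n m (h+1) + B (n+1) m h := by
  rw [← hA n (m+1) h, ← hB n (m+1) h, ← hA n m (h+1), ← hB (n+1) m h]
  abel

theorem elimination_gives_quadrilateral_general (N : ℕ) (p₁ p₂ : ℂ)
    (u W : ℤ → ℤ → ZMod N → ℂ)
    (ha : ∀ (n m : ℤ) (h : ZMod N),
      W (n+1) m h - W n (m+1) h
        = p₁ * (u n m h - u (n+1) m h) - p₂ * (u n m h - u n (m+1) h)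
          + u n m h * (u n (m+1) h - u (n+1) m h))
    (hb : ∀ (n m : ℤ) (h : ZMod N),
      W n (m+1) h - W n m (h+1)
        = p₂ * (u n m h - u n (m+1) h) + u n m h * (u n m (h+1) - u n (m+1) h)) :
    ∀ (n m : ℤ) (h : ZMod N),
      (p₁ + u n (m+1) (h+1) - u (n+1) (m+1) h) * (p₂ + u n m (h+1) - u n (m+1) h)
        = (p₂ + u (n+1) m (h+1) - u (n+1) (m+1) h) * (p₁ + u n m (h+1) - u (n+1) m h) := by
  intro n m h
  have hW := shift_differences_compatible W _ _ ha hb n m h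
  linear_combination -hW

theorem elimination_gives_quadrilateral (N : ℕ) (hN : 1 ≤ N) (p₁ p₂ : ℂ)
    (u W : ℤ → ℤ → ZMod N → ℂ)
    (ha : ∀ (n m : ℤ) (h : ZMod N),
      W (n+1) m h - W n (m+1) h
        = p₁ * (u n m h - u (n+1) m h) - p₂ * (u n m h - u n (m+1) h)
          + u n m h * (u n (m+1) h - u (n+1) m h))
    (hb : ∀ (n m : ℤ) (h : ZMod N),
      W n (m+1) h - W n m (h+1)
        = p₂ * (u n m h - u n (m+1) h) + u n m h * (u n m (h+1) - u n (m+1) h))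
    (hc : ∀ (n m : ℤ) (h : ZMod N),
      W n (m+1) h - W (n+1) m h
        = -p₁ * (u n m h - u (n+1) m h) + u n m h * (u (n+1) m h - u n m (h+1))) :
    ∀ (n m : ℤ) (h : ZMod N),
      (p₁ + u n (m+1) (h+1) - u (n+1) (m+1) h) * (p₂ + u n m (h+1) - u n (m+1) h)
        = (p₂ + u (n+1) m (h+1) - u (n+1) (m+1) h) * (p₁ + u n m (h+1) - u (n+1) m h) :=
  elimination_gives_quadrilateral_general N p₁ p₂ u W ha hb
end

section
/- Let N ≥ 1, p₁, p₂ ∈ ℂ with p₁ ≠ p₂, and let u : ℤ → ℤ → ZMod N → ℂ and τ : ℤ → ℤ → ZMod N → ℂ with τ everywhere nonzero. Assume for all n, m ∈ ℤ and h ∈ ZMod N: (a) p₁ − p₂ + u n (m+1) h − u (n+1) m h = (p₁−p₂)·(τ n m h · τ (n+1) (m+1) h)/(τ n (m+1) h · τ (n+1) m h); (b) p₁ + u n m (h+1) − u (n+1) m h = p₁·(τ n m h · τ (n+1) m (h+1))/(τ n m (h+1) · τ (n+1) m h); (c) p₂ + u n m (h+1) − u n (m+1) h = p₂·(τ n m h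 · τ n (m+1) (h+1))/(τ n m (h+1) · τ n (m+1) h). Then τ satisfies the multicomponent bilinear equation: for all n, m, h, p₁·(τ n m (h+1) · τ (n+1) (m+1) h − τ n (m+1) h · τ (n+1) m (h+1)) = p₂·(τ n m (h+1) · τ (n+1) (m+1) h − τ (n+1) m h · τ n (m+1) (h+1)). -/
theorem tau_bilinear_equation (N : ℕ) (hN : 1 ≤ N) (p₁ p₂ : ℂ) (hp : p₁ ≠ p₂)
    (u τ : ℤ → ℤ → ZMod N → ℂ)
    (hτ : ∀ n m h, τ n m h ≠ 0)
    (ha : ∀ (n m : ℤ) (h : ZMod N),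
      p₁ - p₂ + u n (m+1) h - u (n+1) m h
        = (p₁ - p₂) * (τ n m h * τ (n+1) (m+1) h) / (τ n (m+1) h * τ (n+1) m h))
    (hb : ∀ (n m : ℤ) (h : ZMod N),
      p₁ + u n m (h+1) - u (n+1) m h
        = p₁ * (τ n m h * τ (n+1) m (h+1)) / (τ n m (h+1) * τ (n+1) m h))
    (hc : ∀ (n m : ℤ) (h : ZMod N),
      p₂ + u n m (h+1) - u n (m+1) h
        = p₂ * (τ n m h * τ n (m+1) (h+1)) / (τ n m (h+1) * τ n (m+1) h)) :
    ∀ (n m : ℤ) (h : ZMod N),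
      p₁ * (τ n m (h+1) * τ (n+1) (m+1) h - τ n (m+1) h * τ (n+1) m (h+1))
        = p₂ * (τ n m (h+1) * τ (n+1) (m+1) h - τ (n+1) m h * τ n (m+1) (h+1)) := by
  intro n m h
  have E : (p₁ - p₂) * (τ n m h * τ (n+1) (m+1) h) / (τ n (m+1) h * τ (n+1) m h)
      = p₁ * (τ n m h * τ (n+1) m (h+1)) / (τ n m (h+1) * τ (n+1) m h)
        - p₂ * (τ n m h * τ n (m+1) (h+1)) / (τ n m (h+1) * τ n (m+1) h) := by
    linear_combination -(ha n m h) + (hb n m h) - (hc n m h)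
  have h1 := hτ n (m+1) h
  have h2 := hτ (n+1) m h
  have h3 := hτ n m (h+1)
  field_simp at E
  apply mul_left_cancel₀
    (mul_ne_zero (mul_ne_zero (mul_ne_zero (hτ n m h) h3) h2) h1)
  linear_combination (τ n m (h+1) * τ (n+1) m h * τ n (m+1) h) * E
end

section
/- Let N ≥ 1, p₁ ∈ ℂ, α ∈ ZMod N, and let u : ℤ → ℤ → ZMod N → ℂ and v : ℤ → ℤ → ZMod N → ℂ with v everywhere nonzero. Assume for all n, m ∈ ℤ and r ∈ ZMod N the Bäcklund relation p₁ + u n m (r+1+α) − u (n+1) m r = p₁ · (v (n+1) m r)/(v n m (r+α)), and assume ∏_{r ∈ ZMod N} v n m r = 1 for all n, m. Then for all n, m: ∏_{r ∈ ZMod N} (p₁ + u n m (r+1+α) − u (n+1) m r) = p₁^N. -/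
theorem Fintype.prod_const_mul_div_comp_add_right {G M : Type*} [AddGroup G] [Fintype G]
    [DivisionCommMonoid M] (c : M) (f g : G → M) (a : G) :
    ∏ r, c * f r / g (r + a) = c ^ Fintype.card G * (∏ r, f r) / ∏ r, g r := by
  rw [Finset.prod_div_distrib, Finset.prod_mul_distrib, Finset.prod_const, Finset.card_univ,
    Fintype.prod_equiv (Equiv.addRight a) (fun r => g (r + a)) g fun _ => rfl]

theorem additive_first_integral_general (N : ℕ) [NeZero N] (p₁ : ℂ) (α : ZMod N)
    (u v : ℤ → ℤ → ZMod N → ℂ)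
    (hBT : ∀ (n m : ℤ) (r : ZMod N),
      p₁ + u n m (r + 1 + α) - u (n+1) m r = p₁ * (v (n+1) m r) / (v n m (r + α)))
    (hprod : ∀ (n m : ℤ), ∏ r : ZMod N, v n m r = 1) :
    ∀ (n m : ℤ), ∏ r : ZMod N, (p₁ + u n m (r + 1 + α) - u (n+1) m r) = p₁ ^ N := by
  intro n m
  simp_rw [hBT n m]
  rw [Fintype.prod_const_mul_div_comp_add_right, hprod, hprod, ZMod.card, mul_one, div_one]

theorem additive_first_integral (N : ℕ) [NeZero N] (p₁ : ℂ) (α : ZMod N)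
    (u v : ℤ → ℤ → ZMod N → ℂ)
    (hv : ∀ n m r, v n m r ≠ 0)
    (hBT : ∀ (n m : ℤ) (r : ZMod N),
      p₁ + u n m (r + 1 + α) - u (n+1) m r = p₁ * (v (n+1) m r) / (v n m (r + α)))
    (hprod : ∀ (n m : ℤ), ∏ r : ZMod N, v n m r = 1) :
    ∀ (n m : ℤ), ∏ r : ZMod N, (p₁ + u n m (r + 1 + α) - u (n+1) m r) = p₁ ^ N :=
  additive_first_integral_general N p₁ α u v hBT hprod
end

section
/- Let p, q ∈ ℂ with p ≠ q, and let τ : ℤ → ℤ → ℂ be nowhere zero. Assume that for all n, m ∈ ℤ the two 6-point equations hold: (p+q)·τ n (m+1) · τ (n+2) m + (p−q)·τ n m · τ (n+2) (m+1) = 2p·τ (n+1) m · τ (n+1) (m+1), and (p+q)·τ (n+1) m · τ n (m+2) − (p−q)·τ n m · τ (n+1) (m+2) = 2q·τ n (m+1) · τ (n+1) (m+1). Then for all n, m the 5-point equation holds: (p−q)²·τ n m · τ (n+2) (m+2) − (p+q)²·τ (n+2) m · τ n (m+2) + 4·p·q·(τ (n+1) (m+1))² = 0. -/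
/-!
Multiplied by `τ (n+1) m`, the 5-point expression is the combination
`-(p-q) τ(n,m) · B(n+1,m) - (p+q) τ(n+2,m) · B(n,m) - 2q τ(n+1,m+1) · A(n,m)`
of the 6-point equations `A` (horizontal) and `B` (vertical), so it vanishes wherever
`τ (n+1) m ≠ 0`.
-/

theorem mul_five_point_eq_zero_of_six_point {R : Type*} [CommRing R] (p q : R)
    (τ : ℤ → ℤ → R) (n m : ℤ)
    (hA : (p + q) * τ n (m+1) * τ (n+2) m + (p - q) * τ n m * τ (n+2) (m+1)
        = 2 * p * τ (n+1) m * τ (n+1) (m+1))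
    (hB : (p + q) * τ (n+1) m * τ n (m+2) - (p - q) * τ n m * τ (n+1) (m+2)
        = 2 * q * τ n (m+1) * τ (n+1) (m+1))
    (hB' : (p + q) * τ (n+2) m * τ (n+1) (m+2) - (p - q) * τ (n+1) m * τ (n+2) (m+2)
        = 2 * q * τ (n+1) (m+1) * τ (n+2) (m+1)) :
    τ (n+1) m * ((p - q)^2 * τ n m * τ (n+2) (m+2) - (p + q)^2 * τ (n+2) m * τ n (m+2)
      + 4 * p * q * (τ (n+1) (m+1))^2) = 0 := by
  linear_combination (-(p - q) * τ n m) * hB' + (-(p + q) * τ (n+2) m) * hB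
    - (2 * q * τ (n+1) (m+1)) * hA

theorem five_point_of_six_point {R : Type*} [CommRing R] [NoZeroDivisors R] (p q : R)
    (τ : ℤ → ℤ → R) (hτ : ∀ n m, τ n m ≠ 0)
    (h6a : ∀ n m : ℤ,
      (p + q) * τ n (m+1) * τ (n+2) m + (p - q) * τ n m * τ (n+2) (m+1)
        = 2 * p * τ (n+1) m * τ (n+1) (m+1))
    (h6b : ∀ n m : ℤ,
      (p + q) * τ (n+1) m * τ n (m+2) - (p - q) * τ n m * τ (n+1) (m+2)
        = 2 * q * τ n (m+1) * τ (n+1) (m+1))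
    (n m : ℤ) :
    (p - q)^2 * τ n m * τ (n+2) (m+2) - (p + q)^2 * τ (n+2) m * τ n (m+2)
      + 4 * p * q * (τ (n+1) (m+1))^2 = 0 := by
  have hB' := h6b (n+1) m
  rw [show n + 1 + 1 = n + 2 by ring] at hB'
  have h := mul_five_point_eq_zero_of_six_point p q τ n m (h6a n m) (h6b n m) hB'
  exact (mul_eq_zero.mp h).resolve_left (hτ _ _)

theorem six_point_implies_five_point_general (p q : ℂ)
    (τ : ℤ → ℤ → ℂ) (hτ : ∀ n m, τ n m ≠ 0)
    (h6a : ∀ n m : ℤ,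
      (p + q) * τ n (m+1) * τ (n+2) m + (p - q) * τ n m * τ (n+2) (m+1)
        = 2 * p * τ (n+1) m * τ (n+1) (m+1))
    (h6b : ∀ n m : ℤ,
      (p + q) * τ (n+1) m * τ n (m+2) - (p - q) * τ n m * τ (n+1) (m+2)
        = 2 * q * τ n (m+1) * τ (n+1) (m+1)) :
    ∀ n m : ℤ,
      (p - q)^2 * τ n m * τ (n+2) (m+2) - (p + q)^2 * τ (n+2) m * τ n (m+2)
        + 4 * p * q * (τ (n+1) (m+1))^2 = 0 :=
  five_point_of_six_point p q τ hτ h6a h6b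

theorem six_point_implies_five_point (p q : ℂ) (hpq : p ≠ q)
    (τ : ℤ → ℤ → ℂ) (hτ : ∀ n m, τ n m ≠ 0)
    (h6a : ∀ n m : ℤ,
      (p + q) * τ n (m+1) * τ (n+2) m + (p - q) * τ n m * τ (n+2) (m+1)
        = 2 * p * τ (n+1) m * τ (n+1) (m+1))
    (h6b : ∀ n m : ℤ,
      (p + q) * τ (n+1) m * τ n (m+2) - (p - q) * τ n m * τ (n+1) (m+2)
        = 2 * q * τ n (m+1) * τ (n+1) (m+1)) :
    ∀ n m : ℤ,
      (p - q)^2 * τ n m * τ (n+2) (m+2) - (p + q)^2 * τ (n+2) m * τ n (m+2)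
        + 4 * p * q * (τ (n+1) (m+1))^2 = 0 :=
  six_point_implies_five_point_general p q τ hτ h6a h6b
end

section
/- Let p₁, p₂ ∈ ℂ and let v : ℤ → ℤ → ℂ be nowhere zero. Define v⁰ = v and v¹ = 1/v (i.e. v¹ n m = (v n m)⁻¹). If the pair (v⁰, v¹) satisfies the N = 2 Fordy–Xenitidis modified system p₁·( (v⁰ (n+1) (m+1))/(v⁰ n (m+1)) − (v¹ (n+1) m)/(v¹ n m) ) = p₂·( (v⁰ (n+1) (m+1))/(v⁰ (n+1) m) − (v¹ n (m+1))/(v¹ n m) ) for all n, m, then v satisfies the discrete modified KdV equation p₁·( v n m · v n (m+1) − v (n+1) m · v (n+1) (m+1) ) = p₂·( v n m · v (n+1) m − v n (m+1) · v (n+1) (m+1) ) for all n, m; and conversely. -/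
theorem N2_modified_system_iff_mKdV (p₁ p₂ : ℂ)
    (v : ℤ → ℤ → ℂ) (hv : ∀ n m, v n m ≠ 0)
    (v0 v1 : ℤ → ℤ → ℂ)
    (hv0 : ∀ n m, v0 n m = v n m)
    (hv1 : ∀ n m, v1 n m = (v n m)⁻¹) :
    (∀ n m : ℤ,
      p₁ * ((v0 (n+1) (m+1)) / (v0 n (m+1)) - (v1 (n+1) m) / (v1 n m))
        = p₂ * ((v0 (n+1) (m+1)) / (v0 (n+1) m) - (v1 n (m+1)) / (v1 n m)))
    ↔ (∀ n m : ℤ,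
      p₁ * (v n m * v n (m+1) - v (n+1) m * v (n+1) (m+1))
        = p₂ * (v n m * v (n+1) m - v n (m+1) * v (n+1) (m+1))) := by
  have key : ∀ n m : ℤ,
      (p₁ * ((v0 (n+1) (m+1)) / (v0 n (m+1)) - (v1 (n+1) m) / (v1 n m))
        = p₂ * ((v0 (n+1) (m+1)) / (v0 (n+1) m) - (v1 n (m+1)) / (v1 n m)))
      ↔ (p₁ * (v n m * v n (m+1) - v (n+1) m * v (n+1) (m+1))
        = p₂ * (v n m * v (n+1) m - v n (m+1) * v (n+1) (m+1))) := by
    intro n m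
    simp only [hv0, hv1]
    have h1 := hv n m
    have h2 := hv (n+1) m
    have h3 := hv n (m+1)
    have h4 := hv (n+1) (m+1)
    constructor <;> intro h
    · field_simp at h
      apply mul_left_cancel₀ (mul_ne_zero h2 h3)
      linear_combination (-(v (n+1) m * v n (m+1))) * h
    · field_simp
      linear_combination -h
  exact ⟨fun h n m => (key n m).mp (h n m), fun h n m => (key n m).mpr (h n m)⟩
end
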